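/- arXiv:2502.06718 — 9 statements merged into one kernel-verified Lean document; each statement's English description precedes it below -/
import Mathlib

section
/- If a ≠ 0 and f ≠ 0, then the matrix X = X(a,b,c,d,e,f) satisfies rank X^i = 7 − i for all 1 ≤ i ≤ 6, i.e. X is a regular nilpotent matrix (a single Jordan block of size 7). -/
open Matrix

section Aux

variable {F : Type*} [Field F]

/-- entries vanish strictly below the `s`-th superdiagonal -/
def G2Aux.IsShift {n : ℕ} (s : ℕ) (M : Matrix (Fin n) (Fin n) F) : Prop :=
  ∀ j k : Fin n, (k : ℕ) < (j : ℕ) + s → M j k = 0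

namespace G2Aux

lemma IsShift.mul {n s t : ℕ} {M N : Matrix (Fin n) (Fin n) F}
    (hM : IsShift s M) (hN : IsShift t N) : IsShift (s + t) (M * N) := by
  intro j k hk
  rw [Matrix.mul_apply]
  apply Finset.sum_eq_zero
  intro l _
  by_cases hl : (l : ℕ) < (j : ℕ) + s
  · rw [hM j l hl, zero_mul]
  · rw [hN l k (by omega), mul_zero]

lemma IsShift.mul_diag {n s t : ℕ} {M N : Matrix (Fin n) (Fin n) F}
    (hM : IsShift s M) (hN : IsShift t N) (j : ℕ) (h1 : j < n) (h2 : j + s < n)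
    (h3 : j + s + t < n) :
    (M * N) ⟨j, h1⟩ ⟨j + s + t, h3⟩ = M ⟨j, h1⟩ ⟨j + s, h2⟩ * N ⟨j + s, h2⟩ ⟨j + s + t, h3⟩ := by
  rw [Matrix.mul_apply]
  refine Finset.sum_eq_single_of_mem (⟨j + s, h2⟩ : Fin n) (Finset.mem_univ _) fun l _ hl => ?_
  by_cases hls : (l : ℕ) < j + s
  · rw [hM _ _ hls, zero_mul]
  · rw [hN l _ ?_, mul_zero]
    have hne : (l : ℕ) ≠ j + s := fun h => hl (Fin.ext h)
    show (j : ℕ) + s + t < (l : ℕ) + t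
    omega

/-- the `m`-th superdiagonal entry of `M`, as a total function of `m : ℕ`. -/
noncomputable def sd {n : ℕ} (M : Matrix (Fin n) (Fin n) F) (m : ℕ) : F :=
  if h : m + 1 < n then M ⟨m, by omega⟩ ⟨m + 1, h⟩ else 0

lemma pow_isShift {n : ℕ} {M : Matrix (Fin n) (Fin n) F} (hM : IsShift 1 M) (i : ℕ) :
    IsShift i (M ^ i) := by
  induction i with
  | zero =>
    intro j k hk
    exact Matrix.one_apply_ne (Fin.ne_of_val_ne (by omega))
  | succ i ih =>
    rw [pow_succ]
    exact ih.mul hM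

lemma pow_diag {n : ℕ} {M : Matrix (Fin n) (Fin n) F} (hM : IsShift 1 M) (i : ℕ)
    (j : ℕ) (h1 : j < n) (h2 : j + i < n) :
    (M ^ i) ⟨j, h1⟩ ⟨j + i, h2⟩ = ∏ m ∈ Finset.range i, sd M (j + m) := by
  induction i with
  | zero => simp [Matrix.one_apply]
  | succ i ih =>
    have h2' : j + i < n := by omega
    have key := (pow_isShift hM i).mul_diag hM j h1 h2' h2
    rw [pow_succ]
    refine key.trans ?_
    rw [ih h2', Finset.prod_range_succ, sd, dif_pos (show j + i + 1 < n from h2)]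

lemma rank_submatrix_le'' {l o m : Type*} [Fintype l] [Fintype o] [Fintype m] [DecidableEq m]
    (M : Matrix m m F) (f : l → m) (g : o → m) :
    (M.submatrix f g).rank ≤ M.rank := by
  have h1 : M.submatrix f id = ((1 : Matrix m m F).submatrix f (Equiv.refl m)) * M := by
    rw [Matrix.one_submatrix_mul]
    rfl
  have h2 : M.submatrix f g =
      (M.submatrix f id) * ((1 : Matrix m m F).submatrix (Equiv.refl m) g) := by
    rw [Matrix.mul_submatrix_one]
    rfl
  calc (M.submatrix f g).rank ≤ (M.submatrix f id).rank := by
        rw [h2]; exact Matrix.rank_mul_le_left _ _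
    _ ≤ M.rank := by rw [h1]; exact Matrix.rank_mul_le_right _ _

end G2Aux

end Aux

/-- The image of the general nilpotent element
`a·e_{α₁} + b·e_{α₁+α₂} + c·e_{2α₁+α₂} + d·e_{3α₁+α₂} + e·e_{3α₁+2α₂} + f·e_{α₂}`
of the Lie algebra `g₂` over `F` in its faithful 7-dimensional representation. -/
noncomputable def g2X {F : Type*} [Field F] (a b c d e f : F) :
    Matrix (Fin 7) (Fin 7) F :=
  !![0, a, b, 2*c, d, e, 0;
     0, 0, f, -2*b, -c, 0, e;
     0, 0, 0, 2*a, 0, -c, -d;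
     0, 0, 0, 0, a, b, c;
     0, 0, 0, 0, 0, f, -b;
     0, 0, 0, 0, 0, 0, a;
     0, 0, 0, 0, 0, 0, 0]

/-- If `a ≠ 0` and `f ≠ 0` then `rank X^i = 7 − i` for all `1 ≤ i ≤ 6`,
i.e. `X = X(a,b,c,d,e,f)` is a regular nilpotent matrix. -/
theorem g2_case_af_ne_zero (F : Type*) [Field F] [Fintype F] (hchar : 3 < ringChar F)
    (a b c d e f : F) (ha : a ≠ 0) (hf : f ≠ 0) :
    ∀ i : ℕ, 1 ≤ i → i ≤ 6 → ((g2X a b c d e f) ^ i).rank = 7 - i := by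
  set X := g2X a b c d e f with hXdef
  have h2 : (2 : F) ≠ 0 := by
    intro h
    have hd : ringChar F ∣ 2 := by
      rw [← ringChar.spec]
      exact_mod_cast h
    have := Nat.le_of_dvd (by norm_num) hd
    omega
  have hX1 : G2Aux.IsShift 1 X := by
    intro j k hk
    fin_cases j <;> fin_cases k <;> first | rfl | (exact absurd hk (by decide))
  have hsd : ∀ k, k < 6 → G2Aux.sd X k ≠ 0 := by
    intro k hk
    interval_cases k <;> (rw [G2Aux.sd, dif_pos (by norm_num)]) <;>
      first
        | exact ha
        | exact hf
        | exact mul_ne_zero h2 ha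
  have h7 : X ^ 7 = 0 := by
    ext j k
    exact G2Aux.pow_isShift hX1 7 j k (by have := k.isLt; omega)
  have lower : ∀ j : ℕ, 1 ≤ j → j ≤ 6 → 7 - j ≤ (X ^ j).rank := by
    intro j hj1 hj6
    set T : Matrix (Fin (7 - j)) (Fin (7 - j)) F :=
      (X ^ j).submatrix (Fin.castLE (by omega))
        (fun l => ⟨(l : ℕ) + j, by have := l.isLt; omega⟩) with hT
    have hTtri : T.BlockTriangular id := by
      intro x y hxy
      apply G2Aux.pow_isShift hX1 j
      have : (y : ℕ) < (x : ℕ) := hxy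
      simp only [Fin.coe_castLE]
      omega
    have hTdet : T.det ≠ 0 := by
      rw [Matrix.det_of_upperTriangular hTtri]
      apply Finset.prod_ne_zero_iff.mpr
      intro l _
      have hl := l.isLt
      have hentry : T l l = ∏ m ∈ Finset.range j, G2Aux.sd X ((l : ℕ) + m) :=
        G2Aux.pow_diag hX1 j (l : ℕ) (by omega) (by omega)
      rw [hentry]
      apply Finset.prod_ne_zero_iff.mpr
      intro m hm
      rw [Finset.mem_range] at hm
      exact hsd _ (by omega)
    have hTrank : T.rank = 7 - j := by
      rw [Matrix.rank_of_isUnit T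
        ((Matrix.isUnit_iff_isUnit_det T).mpr (isUnit_iff_ne_zero.mpr hTdet)),
        Fintype.card_fin]
    calc 7 - j = T.rank := hTrank.symm
      _ ≤ (X ^ j).rank := G2Aux.rank_submatrix_le'' _ _ _
  intro i hi1 hi6
  have hmul : X ^ i * X ^ (7 - i) = 0 := by
    rw [← pow_add, show i + (7 - i) = 7 by omega, h7]
  have hsyl := Matrix.rank_add_rank_le_card_of_mul_eq_zero hmul
  rw [Fintype.card_fin] at hsyl
  have hlo := lower i hi1 hi6
  have hlo' := lower (7 - i) (by omega) (by omega)
  omega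
end

section
/- Suppose a = 0 and f ≠ 0, and let X = X(0,b,c,d,e,f). If b²+cf = 0 and bc+df = 0, then rank X = 2; otherwise rank X = 4. -/
lemma vec7_five {α : Type*} (x : α) (u : Fin 6 → α) : Matrix.vecCons x u 5 = u 4 := rfl

lemma vec7_six {α : Type*} (x : α) (u : Fin 6 → α) : Matrix.vecCons x u 6 = u 5 := rfl

lemma vec6_five {α : Type*} (x : α) (u : Fin 5 → α) : Matrix.vecCons x u 5 = u 4 := rfl

lemma le_rank_aux {F : Type*} [Field F] {k : ℕ} (X : Matrix (Fin 7) (Fin 7) F)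
    (P : Matrix (Fin k) (Fin 7) F) (Q : Matrix (Fin 7) (Fin k) F)
    (h : (P * X * Q).det ≠ 0) : k ≤ X.rank := by
  have hu : IsUnit (P * X * Q) :=
    (Matrix.isUnit_iff_isUnit_det _).mpr (isUnit_iff_ne_zero.mpr h)
  have h1 := Matrix.rank_of_isUnit _ hu
  rw [Fintype.card_fin] at h1
  calc k = (P * X * Q).rank := h1.symm
    _ ≤ (X * Q).rank := by
        rw [Matrix.mul_assoc]; exact Matrix.rank_mul_le_right _ _
    _ ≤ X.rank := Matrix.rank_mul_le_left _ _

lemma rank_le_aux {F : Type*} [Field F] {k : ℕ} (X : Matrix (Fin 7) (Fin 7) F)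
    (A : Matrix (Fin 7) (Fin k) F) (B : Matrix (Fin k) (Fin 7) F)
    (h : X = A * B) : X.rank ≤ k := by
  rw [h]
  exact (Matrix.rank_mul_le_right _ _).trans (by simpa using B.rank_le_card_height)

set_option maxHeartbeats 2000000 in
/-- Let `a = 0` and `f ≠ 0`, `X = X(0,b,c,d,e,f)`. If `b²+cf = 0` and `bc+df = 0`
then `rank X = 2`; otherwise `rank X = 4`. -/
theorem g2_case2_rank_X (F : Type*) [Field F] [Fintype F] (hchar : 3 < ringChar F)
    (b c d e f : F) (hf : f ≠ 0) :
    (b ^ 2 + c * f = 0 ∧ b * c + d * f = 0 → (g2X 0 b c d e f).rank = 2) ∧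
    (¬(b ^ 2 + c * f = 0 ∧ b * c + d * f = 0) → (g2X 0 b c d e f).rank = 4) := by
  have h2ne : (2 : F) ≠ 0 := by
    intro h20
    have hp : CharP F (ringChar F) := ringChar.charP F
    have : (ringChar F) ∣ 2 := (CharP.cast_eq_zero_iff F (ringChar F) 2).mp (by exact_mod_cast h20)
    have := Nat.le_of_dvd (by norm_num) this
    omega
  constructor
  · rintro ⟨h1, h2⟩
    refine le_antisymm
      (rank_le_aux _ !![b/f, e/f; 1, 0; 0, -(c/f); 0, b/f; 0, 1; 0, 0; 0, 0]
        !![0,0,f,-2*b,-c,0,e; 0,0,0,0,0,f,-b] ?_)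
      (le_rank_aux _ !![(0:F),1,0,0,0,0,0; 0,0,0,0,1,0,0]
        !![(0:F),0;0,0;1,0;0,0;0,0;0,1;0,0] ?_)
    · ext i j
      fin_cases i <;> fin_cases j <;>
        simp [g2X, Matrix.mul_apply, Fin.sum_univ_succ, Matrix.cons_val_succ,
          Matrix.cons_val_zero, Fin.sum_univ_zero, vec7_five, vec7_six, vec6_five,
          Matrix.vecHead, Matrix.vecTail]
      all_goals try field_simp
      all_goals
        first
          | ring1
          | linear_combination h1
          | linear_combination -h1
          | linear_combination 2*h1
          | linear_combination -2*h1
          | linear_combination h2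
          | linear_combination -h2
    · have hS : (!![(0:F),1,0,0,0,0,0; 0,0,0,0,1,0,0] * g2X 0 b c d e f *
          !![(0:F),0;0,0;1,0;0,0;0,0;0,1;0,0]) = !![f,0;0,f] := by
        ext i j
        fin_cases i <;> fin_cases j <;>
          simp [g2X, Matrix.mul_apply, Fin.sum_univ_succ, Matrix.cons_val_succ,
            Matrix.cons_val_zero, Fin.sum_univ_zero, vec7_five, vec7_six, vec6_five,
            Matrix.vecHead, Matrix.vecTail]
      rw [hS, Matrix.det_fin_two_of]
      intro hcon
      apply hf
      have : f * f = 0 := by linear_combination hcon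
      rcases mul_eq_zero.mp this with h | h <;> exact h
  · intro hnd
    have hub : (g2X 0 b c d e f).rank ≤ 4 := by
      refine rank_le_aux _
        !![1,0,e,0; 0,1,0,e; 0,0,-c,-d; 0,0,b,c; 0,0,f,-b; 0,0,0,0; 0,0,0,0]
        !![0,0,b,2*c,d,0,0; 0,0,f,-2*b,-c,0,0; 0,0,0,0,0,1,0; 0,0,0,0,0,0,1] ?_
      ext i j
      fin_cases i <;> fin_cases j <;>
        simp [g2X, Matrix.mul_apply, Fin.sum_univ_succ, Matrix.cons_val_succ,
          Matrix.cons_val_zero, Fin.sum_univ_zero, vec7_five, vec7_six, vec6_five,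
          Matrix.vecHead, Matrix.vecTail]
    refine le_antisymm hub ?_
    by_cases hb : b ^ 2 + c * f = 0
    · have h2 : b * c + d * f ≠ 0 := fun hc => hnd ⟨hb, hc⟩
      -- rows 1,2,3,5 ; cols 3,5,6,7
      refine le_rank_aux _
        !![(1:F),0,0,0,0,0,0; 0,1,0,0,0,0,0; 0,0,1,0,0,0,0; 0,0,0,0,1,0,0]
        !![(0:F),0,0,0; 0,0,0,0; 1,0,0,0; 0,0,0,0; 0,1,0,0; 0,0,1,0; 0,0,0,1] ?_
      have hS : (!![(1:F),0,0,0,0,0,0; 0,1,0,0,0,0,0; 0,0,1,0,0,0,0; 0,0,0,0,1,0,0] *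
          g2X 0 b c d e f *
          !![(0:F),0,0,0; 0,0,0,0; 1,0,0,0; 0,0,0,0; 0,1,0,0; 0,0,1,0; 0,0,0,1]) =
          !![b, d, e, 0; f, -c, 0, e; 0, 0, -c, -d; 0, 0, f, -b] := by
        ext i j
        fin_cases i <;> fin_cases j <;>
          simp [g2X, Matrix.mul_apply, Fin.sum_univ_succ, Matrix.cons_val_succ,
            Matrix.cons_val_zero, Fin.sum_univ_zero, vec7_five, vec7_six, vec6_five,
            Matrix.vecHead, Matrix.vecTail]
      rw [hS]
      have hdet : (!![b, d, e, 0; f, -c, 0, e; 0, 0, -c, -d; 0, 0, f, -b]).det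
          = -(b * c + d * f) ^ 2 := by
        simp [Matrix.det_succ_row_zero, Fin.sum_univ_succ,
          show Fin.succAbove (1:Fin 4) 2 = 3 by decide]
        ring
      rw [hdet]
      exact neg_ne_zero.mpr (pow_ne_zero _ h2)
    · -- rows 1,2,4,5 ; cols 3,4,6,7
      refine le_rank_aux _
        !![(1:F),0,0,0,0,0,0; 0,1,0,0,0,0,0; 0,0,0,1,0,0,0; 0,0,0,0,1,0,0]
        !![(0:F),0,0,0; 0,0,0,0; 1,0,0,0; 0,1,0,0; 0,0,0,0; 0,0,1,0; 0,0,0,1] ?_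
      have hS : (!![(1:F),0,0,0,0,0,0; 0,1,0,0,0,0,0; 0,0,0,1,0,0,0; 0,0,0,0,1,0,0] *
          g2X 0 b c d e f *
          !![(0:F),0,0,0; 0,0,0,0; 1,0,0,0; 0,1,0,0; 0,0,0,0; 0,0,1,0; 0,0,0,1]) =
          !![b, 2*c, e, 0; f, -2*b, 0, e; 0, 0, b, c; 0, 0, f, -b] := by
        ext i j
        fin_cases i <;> fin_cases j <;>
          simp [g2X, Matrix.mul_apply, Fin.sum_univ_succ, Matrix.cons_val_succ,
            Matrix.cons_val_zero, Fin.sum_univ_zero, vec7_five, vec7_six, vec6_five,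
            Matrix.vecHead, Matrix.vecTail]
      rw [hS]
      have hdet : (!![b, 2*c, e, 0; f, -2*b, 0, e; 0, 0, b, c; 0, 0, f, -b]).det
          = 2 * (b ^ 2 + c * f) ^ 2 := by
        simp [Matrix.det_succ_row_zero, Fin.sum_univ_succ,
          show Fin.succAbove (1:Fin 4) 2 = 3 by decide]
        ring
      rw [hdet]
      exact mul_ne_zero h2ne (pow_ne_zero _ hb)
end

section
/- Suppose a = 0 and f ≠ 0, and let X = X(0,b,c,d,e,f). If b²+cf = 0 and bc+df = 0, then rank X² = 0. If not both b²+cf and bc+df vanish, then rank X² = 1 if (bc+df)² − 4(b²+cf)(c²−bd) = 0, and rank X² = 2 otherwise. -/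
/-!
For `a = 0`, `X²` vanishes outside rows `0, 1` and columns `5, 6`, where it is the block
`B = [[P, 2R], [-2Q, -P]]` with `P = bc + df`, `Q = b² + cf`, `R = c² - bd`, so
`rank X² = rank B` and `det B = -(P² - 4QR)`. A nonzero singular `2 × 2` matrix has rank one,
and `B ≠ 0` once `P` or `Q` is nonzero because `2 ≠ 0`. If `P = Q = 0`, then `R = 0` too,
by the identity `f R = c Q - b P`.
-/

namespace Matrix

variable {k l m n R : Type*}

theorem rank_mul_mul_of_mul_eq_one [Fintype k] [Fintype l] [Fintype m] [Fintype n]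
    [CommRing R] [StrongRankCondition R] [DecidableEq k] [DecidableEq l] {A : Matrix m k R}
    {B : Matrix k l R} {C : Matrix l n R} {A' : Matrix k m R} {C' : Matrix n l R}
    (hA : A' * A = 1) (hC : C * C' = 1) :
    (A * B * C).rank = B.rank := by
  refine le_antisymm ((rank_mul_le_left _ _).trans (rank_mul_le_right _ _)) ?_
  calc B.rank = (A' * (A * B * C) * C').rank := by
        simp only [Matrix.mul_assoc, hC, Matrix.mul_one, ← Matrix.mul_assoc A', hA, Matrix.one_mul]
    _ ≤ (A * B * C).rank := (rank_mul_le_left _ _).trans (rank_mul_le_right _ _)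

/-- Placing `B` as a block (rows along `r`, columns along `c`) in an otherwise zero matrix
does not change its rank. -/
theorem rank_one_submatrix_mul_mul [Fintype k] [Fintype l] [Fintype m] [Fintype n]
    [CommRing R] [StrongRankCondition R] [DecidableEq k] [DecidableEq l] [DecidableEq m]
    [DecidableEq n] {r : k → m} (hr : r.Injective) {c : l → n} (hc : c.Injective)
    (B : Matrix k l R) :
    ((1 : Matrix m m R).submatrix id r * B * (1 : Matrix n n R).submatrix c id).rank = B.rank :=
  rank_mul_mul_of_mul_eq_one (A' := (1 : Matrix m m R).submatrix r id)
    (C' := (1 : Matrix n n R).submatrix id c)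
    (by rw [← submatrix_mul _ _ _ _ _ Function.bijective_id, Matrix.one_mul, submatrix_one _ hr])
    (by rw [← submatrix_mul _ _ _ _ _ Function.bijective_id, Matrix.one_mul, submatrix_one _ hc])

theorem one_le_rank_of_ne_zero [Fintype n] [Field R] {A : Matrix m n R} (hA : A ≠ 0) :
    1 ≤ A.rank := by
  classical
  rw [rank, Submodule.one_le_finrank_iff, Ne, LinearMap.range_eq_bot]
  exact fun h => hA (toLin'.injective (by rw [toLin'_apply', h, map_zero]))

/-- `A * adj A = det A • 1 = 0`, and both `A` and its adjugate are nonzero, so their ranks are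
positive and add up to at most `2`. -/
theorem rank_fin_two_of_det_eq_zero [Field R] {A : Matrix (Fin 2) (Fin 2) R} (hA : A ≠ 0)
    (hdet : A.det = 0) : A.rank = 1 := by
  have hadj : A.adjugate ≠ 0 := by
    contrapose! hA
    ext i j
    have := congr($hA (1 - j) (1 - i))
    fin_cases i <;> fin_cases j <;> simpa [adjugate_fin_two] using this
  have hsum := rank_add_rank_le_card_of_mul_eq_zero (A := A) (B := A.adjugate)
    (by rw [mul_adjugate, hdet, zero_smul])
  rw [Fintype.card_fin] at hsum
  have := one_le_rank_of_ne_zero hA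
  have := one_le_rank_of_ne_zero hadj
  omega

end Matrix

theorem g2X_zero_sq {F : Type*} [Field F] (b c d e f : F) :
    g2X 0 b c d e f ^ 2 = (1 : Matrix (Fin 7) (Fin 7) F).submatrix id ![0, 1] *
      !![b * c + d * f, 2 * (c ^ 2 - b * d); -2 * (b ^ 2 + c * f), -(b * c + d * f)] *
      (1 : Matrix (Fin 7) (Fin 7) F).submatrix ![5, 6] id := by
  ext i j
  simp only [sq, Matrix.mul_apply, Fin.sum_univ_seven, Fin.sum_univ_two, Matrix.submatrix_apply]
  fin_cases i <;> fin_cases j <;> simp [g2X, Matrix.one_apply] <;> ring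

theorem rank_g2X_zero_sq {F : Type*} [Field F] (b c d e f : F) :
    (g2X 0 b c d e f ^ 2).rank =
      (!![b * c + d * f, 2 * (c ^ 2 - b * d); -2 * (b ^ 2 + c * f), -(b * c + d * f)]).rank := by
  rw [g2X_zero_sq]
  exact Matrix.rank_one_submatrix_mul_mul (by decide) (by decide) _

theorem g2_case2_rank_X_sq_general (F : Type*) [Field F] (hchar : 3 < ringChar F)
    (b c d e f : F) (hf : f ≠ 0) :
    (b ^ 2 + c * f = 0 ∧ b * c + d * f = 0 → ((g2X 0 b c d e f) ^ 2).rank = 0) ∧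
    (¬(b ^ 2 + c * f = 0 ∧ b * c + d * f = 0) →
      ((b * c + d * f) ^ 2 - 4 * (b ^ 2 + c * f) * (c ^ 2 - b * d) = 0 →
        ((g2X 0 b c d e f) ^ 2).rank = 1) ∧
      ((b * c + d * f) ^ 2 - 4 * (b ^ 2 + c * f) * (c ^ 2 - b * d) ≠ 0 →
        ((g2X 0 b c d e f) ^ 2).rank = 2)) := by
  have h2 : (2 : F) ≠ 0 := Ring.two_ne_zero (by omega)
  rw [rank_g2X_zero_sq]
  refine ⟨fun ⟨hQ, hP⟩ => ?_, fun hPQ => ⟨fun hdisc => ?_, fun hdisc => ?_⟩⟩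
  · have hR : c ^ 2 - b * d = 0 := by
      refine (mul_eq_zero.mp ?_).resolve_left hf
      linear_combination c * hQ - b * hP
    convert (Matrix.rank_zero : (0 : Matrix (Fin 2) (Fin 2) F).rank = 0)
    ext i j
    fin_cases i <;> fin_cases j <;> simp [hP, hQ, hR]
  · refine Matrix.rank_fin_two_of_det_eq_zero (fun hB => hPQ ?_) ?_
    · have hP : b * c + d * f = 0 := by simpa using congr($hB 0 0)
      have hQ : b ^ 2 + c * f = 0 := by simpa [h2] using congr($hB 1 0)
      exact ⟨hQ, hP⟩
    · rw [Matrix.det_fin_two_of]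
      linear_combination -hdisc
  · refine (Matrix.rank_of_det_ne_zero ?_).trans (Fintype.card_fin 2)
    rw [Matrix.det_fin_two_of]
    contrapose! hdisc
    linear_combination -hdisc

/-- Let `a = 0` and `f ≠ 0`, `X = X(0,b,c,d,e,f)`. If `b²+cf = 0` and `bc+df = 0`
then `rank X² = 0`. If not both vanish, then `rank X² = 1` when
`(bc+df)² − 4(b²+cf)(c²−bd) = 0` and `rank X² = 2` otherwise. -/
theorem g2_case2_rank_X_sq (F : Type*) [Field F] [Fintype F] (hchar : 3 < ringChar F)
    (b c d e f : F) (hf : f ≠ 0) :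
    (b ^ 2 + c * f = 0 ∧ b * c + d * f = 0 → ((g2X 0 b c d e f) ^ 2).rank = 0) ∧
    (¬(b ^ 2 + c * f = 0 ∧ b * c + d * f = 0) →
      ((b * c + d * f) ^ 2 - 4 * (b ^ 2 + c * f) * (c ^ 2 - b * d) = 0 →
        ((g2X 0 b c d e f) ^ 2).rank = 1) ∧
      ((b * c + d * f) ^ 2 - 4 * (b ^ 2 + c * f) * (c ^ 2 - b * d) ≠ 0 →
        ((g2X 0 b c d e f) ^ 2).rank = 2)) :=
  g2_case2_rank_X_sq_general F hchar b c d e f hf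
end

section
/- The number of tuples (b,c,d,e,f) ∈ F^5 with d ≠ 0 satisfying (bc+df)² − 4(b²+cf)(c²−bd) = 0 equals q³·(q−1). -/
/-!
For `d ≠ 0` put `s = c² - bd` and `u = d²f + 3bcd - 2c³`. Then `(b, f) ↦ (s, u)` is a bijection
of `F²`, and `d²·((bc + df)² - 4(b² + cf)(c² - bd)) = u² - 4s³`, so the solutions correspond to
the choices of `c`, `e`, `d ≠ 0` and a point of the cuspidal cubic `u² = 4s³`. That cubic has
exactly `|F|` points: away from characteristic `2` it is parametrised by `t ↦ (t², 2t³)`, and in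
characteristic `2` it is the line `u = 0`.
-/

section

variable {F : Type*} [Field F]

variable (F) in
def cuspidalCubic : Set (F × F) := {p | p.2 ^ 2 = 4 * p.1 ^ 3}

/-- The inverse `(s, u) ↦ u / (2s)` also covers the cusp, since `0 / 0 = 0`. -/
def cuspidalCubicEquivOfTwoNeZero (h2 : (2 : F) ≠ 0) : F ≃ cuspidalCubic F where
  toFun t := ⟨(t ^ 2, 2 * t ^ 3), by simp only [cuspidalCubic, Set.mem_ofPred_eq]; ring⟩
  invFun p := p.1.2 / (2 * p.1.1)
  left_inv t := by
    rcases eq_or_ne t 0 with rfl | ht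
    · simp
    · field_simp
  right_inv := by
    rintro ⟨⟨s, u⟩, hsu : u ^ 2 = 4 * s ^ 3⟩
    rcases eq_or_ne s 0 with rfl | hs
    · obtain rfl : u = 0 := by simpa using hsu
      simp
    · ext
      · field_simp
        linear_combination hsu
      · field_simp
        linear_combination u * hsu

def cuspidalCubicEquivOfTwoEqZero (h2 : (2 : F) = 0) : cuspidalCubic F ≃ F where
  toFun p := p.1.1
  invFun s := ⟨(s, 0), by
    simp only [cuspidalCubic, Set.mem_ofPred_eq]
    linear_combination (-2 * s ^ 3) * h2⟩
  left_inv := by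
    rintro ⟨⟨s, u⟩, hsu : u ^ 2 = 4 * s ^ 3⟩
    obtain rfl : u = 0 := pow_eq_zero_iff two_ne_zero |>.mp <| by
      linear_combination hsu + 2 * s ^ 3 * h2
    rfl
  right_inv _ := rfl

theorem Nat.card_cuspidalCubic : Nat.card (cuspidalCubic F) = Nat.card F := by
  by_cases h2 : (2 : F) = 0
  · exact Nat.card_congr (cuspidalCubicEquivOfTwoEqZero h2)
  · exact (Nat.card_congr (cuspidalCubicEquivOfTwoNeZero h2)).symm

def disc (b c d f : F) : F := (b * c + d * f) ^ 2 - 4 * (b ^ 2 + c * f) * (c ^ 2 - b * d)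

theorem sq_mul_disc (b c d f : F) :
    d ^ 2 * disc b c d f =
      (d ^ 2 * f + 3 * b * c * d - 2 * c ^ 3) ^ 2 - 4 * (c ^ 2 - b * d) ^ 3 := by
  unfold disc
  ring

theorem disc_eq_zero_iff {b c d f : F} (hd : d ≠ 0) :
    disc b c d f = 0 ↔
      (c ^ 2 - b * d, d ^ 2 * f + 3 * b * c * d - 2 * c ^ 3) ∈ cuspidalCubic F := by
  rw [cuspidalCubic, Set.mem_ofPred_eq, ← sub_eq_zero (a := _ ^ 2), ← sq_mul_disc, mul_eq_zero,
    or_iff_right (pow_ne_zero 2 hd)]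

def discZeroEquiv :
    {v : F × F × F × F × F // v.2.2.1 ≠ 0 ∧ disc v.1 v.2.1 v.2.2.1 v.2.2.2.2 = 0} ≃
      F × F × Fˣ × cuspidalCubic F where
  toFun := fun ⟨⟨b, c, d, e, f⟩, hd, hdisc⟩ =>
    (c, e, Units.mk0 d hd, ⟨_, (disc_eq_zero_iff hd).1 hdisc⟩)
  invFun := fun ⟨c, e, d, ⟨⟨s, u⟩, hsu⟩⟩ =>
    ⟨((c ^ 2 - s) / d, c, d, e, (u + 3 * c * s - c ^ 3) / d ^ 2), d.ne_zero, by
      rw [disc_eq_zero_iff d.ne_zero]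
      convert hsu using 2 <;> field_simp <;> ring⟩
  left_inv := by
    rintro ⟨⟨b, c, d, e, f⟩, hd, -⟩
    ext <;> simp only [Units.val_mk0] <;> field_simp <;> ring
  right_inv := by
    rintro ⟨c, e, d, ⟨s, u⟩, -⟩
    ext <;> simp only [Units.val_mk0] <;> field_simp <;> ring

end

theorem count_discriminant_d_ne_zero_general (F : Type*) [Field F] [Fintype F]
    (q : ℕ) (hq : Fintype.card F = q) :
    {v : F × F × F × F × F | v.2.2.1 ≠ 0 ∧
        (v.1 * v.2.1 + v.2.2.1 * v.2.2.2.2) ^ 2 -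
          4 * (v.1 ^ 2 + v.2.1 * v.2.2.2.2) * (v.2.1 ^ 2 - v.1 * v.2.2.1) = 0}.ncard =
      q ^ 3 * (q - 1) := by
  rw [← Nat.card_coe_set_eq]
  refine (Nat.card_congr discZeroEquiv).trans ?_
  simp only [Nat.card_prod, Nat.card_units, Nat.card_cuspidalCubic, Nat.card_eq_fintype_card, hq]
  ring

/-- The number of tuples `(b,c,d,e,f) ∈ F^5` with `d ≠ 0` satisfying
`(bc+df)² − 4(b²+cf)(c²−bd) = 0` equals `q³·(q−1)`. -/
theorem count_discriminant_d_ne_zero (F : Type*) [Field F] [Fintype F]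
    (q : ℕ) (hq : Fintype.card F = q) (hchar : 3 < ringChar F) :
    {v : F × F × F × F × F | v.2.2.1 ≠ 0 ∧
        (v.1 * v.2.1 + v.2.2.1 * v.2.2.2.2) ^ 2 -
          4 * (v.1 ^ 2 + v.2.1 * v.2.2.2.2) * (v.2.1 ^ 2 - v.1 * v.2.2.1) = 0}.ncard =
      q ^ 3 * (q - 1) :=
  count_discriminant_d_ne_zero_general F q hq
end

section
/- The number of tuples (b,c,d,e,f) ∈ F^5 with d = 0 satisfying (bc+df)² − 4(b²+cf)(c²−bd) = 0 (i.e. (bc)² − 4(b²+cf)c² = 0) equals q³ + q²·(q−1). -/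
/-- The number of tuples `(b,c,d,e,f) ∈ F^5` with `d = 0` satisfying
`(bc+df)² − 4(b²+cf)(c²−bd) = 0` equals `q³ + q²·(q−1)`. -/
theorem count_discriminant_d_eq_zero (F : Type*) [Field F] [Fintype F]
    (q : ℕ) (hq : Fintype.card F = q) (hchar : 3 < ringChar F) :
    {v : F × F × F × F × F | v.2.2.1 = 0 ∧
        (v.1 * v.2.1 + v.2.2.1 * v.2.2.2.2) ^ 2 -
          4 * (v.1 ^ 2 + v.2.1 * v.2.2.2.2) * (v.2.1 ^ 2 - v.1 * v.2.2.1) = 0}.ncard =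
      q ^ 3 + q ^ 2 * (q - 1) := by
  have hp : (ringChar F).Prime := CharP.char_is_prime F (ringChar F)
  classical
  have h4 : (4 : F) ≠ 0 := by
    intro h
    have hdvd : ringChar F ∣ 4 := (CharP.cast_eq_zero_iff F (ringChar F) 4).mp (by exact_mod_cast h)
    have hle : ringChar F ≤ 4 := Nat.le_of_dvd (by norm_num) hdvd
    have h44 : ringChar F = 4 := le_antisymm hle hchar
    rw [h44] at hp
    norm_num at hp
  set fA : F × F × F → F × F × F × F × F := fun p => (p.1, (0:F), (0:F), p.2.1, p.2.2) with hfA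
  set fB : F × {c : F // c ≠ 0} × F → F × F × F × F × F :=
    fun p => (p.1, (p.2.1 : F), (0:F), p.2.2, -3 * p.1 ^ 2 * (4 * (p.2.1 : F))⁻¹) with hfB
  have hAinj : Function.Injective fA := by
    intro ⟨a1,a2,a3⟩ ⟨b1,b2,b3⟩ h
    simp [hfA, Prod.ext_iff] at h
    simp [Prod.ext_iff, h.1, h.2.1, h.2.2]
  have hBinj : Function.Injective fB := by
    intro ⟨a1,a2,a3⟩ ⟨b1,b2,b3⟩ h
    simp [hfB, Prod.ext_iff] at h
    exact Prod.ext h.1 (Prod.ext (Subtype.ext h.2.1) h.2.2.1)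
  have hset : {v : F × F × F × F × F | v.2.2.1 = 0 ∧
        (v.1 * v.2.1 + v.2.2.1 * v.2.2.2.2) ^ 2 -
          4 * (v.1 ^ 2 + v.2.1 * v.2.2.2.2) * (v.2.1 ^ 2 - v.1 * v.2.2.1) = 0} =
      fA '' Set.univ ∪ fB '' Set.univ := by
    ext ⟨b, c, d, e, f⟩
    simp only [Set.mem_setOf_eq, Set.image_univ, Set.mem_union, Set.mem_range, hfA, hfB,
      Prod.mk.injEq, Prod.exists, Subtype.exists]
    constructor
    · rintro ⟨rfl, heq⟩
      rcases eq_or_ne c 0 with rfl | hc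
      · exact Or.inl ⟨b, e, f, rfl, rfl, rfl, rfl, rfl⟩
      · refine Or.inr ⟨b, c, hc, e, rfl, rfl, rfl, rfl, ?_⟩
        have h4c : (4 : F) * c ≠ 0 := mul_ne_zero h4 hc
        field_simp
        have : c ^ 2 * (-3 * b ^ 2 - 4 * (c * f)) = 0 := by linear_combination heq
        have h2 : -3 * b ^ 2 - 4 * (c * f) = 0 := by
          rcases mul_eq_zero.mp this with h | h
          · exact absurd (pow_eq_zero_iff (by norm_num) |>.mp h) hc
          · exact h
        linear_combination h2
    · rintro (⟨b', e', f', rfl, rfl, rfl, rfl, rfl⟩ | ⟨b', c', hc', e', rfl, rfl, rfl, rfl, rfl⟩)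
      · constructor <;> ring
      · refine ⟨rfl, ?_⟩
        have h4c : (4 : F) * c' ≠ 0 := mul_ne_zero h4 hc'
        field_simp
        ring
  rw [hset, Set.ncard_union_eq ?_ (Set.toFinite _) (Set.toFinite _)]
  · rw [Set.ncard_image_of_injective _ hAinj, Set.ncard_image_of_injective _ hBinj,
      Set.ncard_univ, Set.ncard_univ, Nat.card_eq_fintype_card, Nat.card_eq_fintype_card]
    have hcne : Fintype.card {c : F // c ≠ 0} = q - 1 := by
      have h1 : Fintype.card {c : F // ¬ c = 0} =
          Fintype.card F - Fintype.card {c : F // c = 0} := Fintype.card_subtype_compl _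
      simp only [Fintype.card_subtype_eq] at h1
      rw [← hq]; exact h1
    simp [Fintype.card_prod, hq, hcne]
    ring
  · rw [Set.disjoint_left]
    rintro x ⟨p, -, rfl⟩ ⟨p', -, h⟩
    have := congrArg (fun v => v.2.1) h
    simp [hfA, hfB] at this
    exact p'.2.1.2 this
end

section
/- The number of tuples (b,c,d,e,f) ∈ F^5 with f = 0 satisfying (bc+df)² − 4(b²+cf)(c²−bd) = 0 (i.e. (bc)² − 4b²(c²−bd) = 0) equals q³ + q²·(q−1). -/
open Finset

/-- The number of tuples `(b,c,d,e,f) ∈ F^5` with `f = 0` satisfying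
`(bc+df)² − 4(b²+cf)(c²−bd) = 0` equals `q³ + q²·(q−1)`. -/
theorem count_discriminant_f_eq_zero (F : Type*) [Field F] [Fintype F]
    (q : ℕ) (hq : Fintype.card F = q) (hchar : 3 < ringChar F) :
    {v : F × F × F × F × F | v.2.2.2.2 = 0 ∧
        (v.1 * v.2.1 + v.2.2.1 * v.2.2.2.2) ^ 2 -
          4 * (v.1 ^ 2 + v.2.1 * v.2.2.2.2) * (v.2.1 ^ 2 - v.1 * v.2.2.1) = 0}.ncard =
      q ^ 3 + q ^ 2 * (q - 1) := by
  classical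
  have h2 : (2 : F) ≠ 0 := by
    intro h
    have hd := (CharP.cast_eq_zero_iff F (ringChar F) 2).mp (by exact_mod_cast h)
    have := Nat.le_of_dvd (by norm_num) hd
    omega
  have h3 : (3 : F) ≠ 0 := by
    intro h
    have hd := (CharP.cast_eq_zero_iff F (ringChar F) 3).mp (by exact_mod_cast h)
    have := Nat.le_of_dvd (by norm_num) hd
    omega
  have h4 : (4 : F) ≠ 0 := by
    have : (4 : F) = 2 * 2 := by norm_num
    rw [this]; exact mul_ne_zero h2 h2
  have hset : {v : F × F × F × F × F | v.2.2.2.2 = 0 ∧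
        (v.1 * v.2.1 + v.2.2.1 * v.2.2.2.2) ^ 2 -
          4 * (v.1 ^ 2 + v.2.1 * v.2.2.2.2) * (v.2.1 ^ 2 - v.1 * v.2.2.1) = 0} =
      ↑(univ.filter fun v : F × F × F × F × F => v.2.2.2.2 = 0 ∧
        (v.1 * v.2.1 + v.2.2.1 * v.2.2.2.2) ^ 2 -
          4 * (v.1 ^ 2 + v.2.1 * v.2.2.2.2) * (v.2.1 ^ 2 - v.1 * v.2.2.1) = 0) := by
    ext v; simp [Set.mem_setOf_eq]
  rw [hset, Set.ncard_coe_finset, card_filter]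
  simp only [Fintype.sum_prod_type]
  -- inner sum over f
  have hf : ∀ b c d e : F,
      (∑ f : F, if f = 0 ∧ (b * c + d * f) ^ 2 -
          4 * (b ^ 2 + c * f) * (c ^ 2 - b * d) = 0 then (1 : ℕ) else 0) =
      if b ^ 2 * (4 * b * d - 3 * c ^ 2) = 0 then 1 else 0 := by
    intro b c d e
    rw [Finset.sum_eq_single 0]
    · have hq0 : (b * c + d * 0) ^ 2 - 4 * (b ^ 2 + c * 0) * (c ^ 2 - b * d) =
          b ^ 2 * (4 * b * d - 3 * c ^ 2) := by ring
      rw [hq0]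
      simp
    · intro f _ hfne
      simp [hfne]
    · intro h; exact absurd (mem_univ 0) h
  have he : ∀ b c d : F,
      (∑ e : F, ∑ f : F, if f = 0 ∧ (b * c + d * f) ^ 2 -
          4 * (b ^ 2 + c * f) * (c ^ 2 - b * d) = 0 then (1 : ℕ) else 0) =
      q * (if b ^ 2 * (4 * b * d - 3 * c ^ 2) = 0 then 1 else 0) := by
    intro b c d
    rw [Finset.sum_congr rfl fun e _ => hf b c d e]
    rw [Finset.sum_const, card_univ, hq, smul_eq_mul]
  have hd : ∀ b c : F,
      (∑ d : F, if b ^ 2 * (4 * b * d - 3 * c ^ 2) = 0 then (1 : ℕ) else 0) =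
      if b = 0 then q else 1 := by
    intro b c
    by_cases hb : b = 0
    · simp [hb, card_univ, hq]
    · have h4b : (4 * b : F) ≠ 0 := mul_ne_zero h4 hb
      have hiff : ∀ d : F, b ^ 2 * (4 * b * d - 3 * c ^ 2) = 0 ↔
          d = 3 * c ^ 2 / (4 * b) := by
        intro d
        rw [mul_eq_zero, pow_eq_zero_iff (by norm_num)]
        simp only [hb, false_or, sub_eq_zero]
        rw [eq_div_iff h4b]
        constructor <;> intro h <;> linear_combination h
      simp only [hiff, hb, if_false]
      rw [Finset.sum_ite_eq' univ (3 * c ^ 2 / (4 * b)) (fun _ => (1:ℕ))]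
      simp
  calc (∑ b : F, ∑ c : F, ∑ d : F, ∑ e : F, ∑ f : F,
        if f = 0 ∧ (b * c + d * f) ^ 2 -
          4 * (b ^ 2 + c * f) * (c ^ 2 - b * d) = 0 then (1 : ℕ) else 0)
      = ∑ b : F, ∑ c : F, ∑ d : F,
          q * (if b ^ 2 * (4 * b * d - 3 * c ^ 2) = 0 then 1 else 0) := by
        refine Finset.sum_congr rfl fun b _ => Finset.sum_congr rfl fun c _ =>
          Finset.sum_congr rfl fun d _ => he b c d
    _ = ∑ b : F, ∑ c : F, q * (if b = 0 then q else 1) := by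
        refine Finset.sum_congr rfl fun b _ => Finset.sum_congr rfl fun c _ => ?_
        rw [← Finset.mul_sum, hd b c]
    _ = ∑ b : F, q * (q * (if b = 0 then q else 1)) := by
        refine Finset.sum_congr rfl fun b _ => ?_
        rw [Finset.sum_const, card_univ, hq, smul_eq_mul]
    _ = q ^ 3 + q ^ 2 * (q - 1) := by
        rw [Finset.sum_eq_add_sum_sdiff_singleton_of_mem (mem_univ (0:F))]
        have : ∀ b ∈ univ \ {(0:F)}, q * (q * (if b = 0 then q else 1)) = q * q := by
          intro b hb
          simp only [mem_sdiff, mem_singleton] at hb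
          rw [if_neg hb.2]; ring
        rw [Finset.sum_congr rfl this, Finset.sum_const, card_sdiff_of_subset (by simp),
          card_univ, hq, card_singleton, if_pos rfl, smul_eq_mul]
        ring
end

section
/- The number of tuples (b,c,d,e,f) ∈ F^5 with f ≠ 0 satisfying (bc+df)² − 4(b²+cf)(c²−bd) = 0 equals q³·(q−1). -/
/-!
For fixed `b`, `c` and `f ≠ 0`, completing the square in `d` turns the equation into
`(2f²d + 6bcf + 4b³)² = 16 (b² + cf)³`, which has `1 + χ(b² + cf)` solutions `d`, where `χ` is
the quadratic character of `F`. Since `c ↦ b² + cf` is a bijection of `F`, the character values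
sum to zero over `c`, so there are exactly `q` pairs `(c, d)`. The coordinates `b` and `e` are
free and `f` takes `q - 1` values.
-/

open Finset

section Affine

variable {F : Type*} [Field F]

def affinePerm {a : F} (ha : a ≠ 0) (b : F) : Equiv.Perm F :=
  (Equiv.mulLeft₀ a ha).trans (Equiv.addRight b)

@[simp] lemma affinePerm_apply {a : F} (ha : a ≠ 0) (b x : F) :
    affinePerm ha b x = a * x + b := rfl

variable [Fintype F] [DecidableEq F]

lemma card_filter_affine_sq_eq {a : F} (ha : a ≠ 0) (b c : F) :
    #{x | (a * x + b) ^ 2 = c} = #{y : F | y ^ 2 = c} :=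
  card_equiv (affinePerm ha b) (by simp)

lemma sum_quadraticChar_affine (hF : ringChar F ≠ 2) {a : F} (ha : a ≠ 0) (b : F) :
    ∑ x : F, quadraticChar F (a * x + b) = 0 := by
  rw [← quadraticChar_sum_zero hF]
  exact Equiv.sum_comp (affinePerm ha b) (quadraticChar F)

lemma quadraticChar_sq_mul_pow_three {a : F} (ha : a ≠ 0) (t : F) :
    quadraticChar F (a ^ 2 * t ^ 3) = quadraticChar F t := by
  rw [map_mul, quadraticChar_sq_one' ha, one_mul, map_pow]
  rcases quadraticChar_isQuadratic F t with h | h | h <;> rw [h] <;> norm_num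

lemma card_filter_affine_sq_eq_sq_mul_pow_three (hF : ringChar F ≠ 2) {a : F} (ha : a ≠ 0)
    (b : F) {s : F} (hs : s ≠ 0) (t : F) :
    (#{x | (a * x + b) ^ 2 = s ^ 2 * t ^ 3} : ℤ) = quadraticChar F t + 1 := by
  rw [card_filter_affine_sq_eq ha, ← quadraticChar_sq_mul_pow_three hs,
    ← quadraticChar_card_sqrts hF, Set.toFinset_ofPred]

end Affine

section Discriminant

variable {F : Type*} [Field F]

lemma discrim_eq_zero_iff_sq_eq (h2 : (2 : F) ≠ 0) {f : F} (hf : f ≠ 0) (b c d : F) :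
    discrim (b ^ 2 + c * f) (b * c + d * f) (c ^ 2 - b * d) = 0 ↔
      (2 * f ^ 2 * d + (6 * b * c * f + 4 * b ^ 3)) ^ 2 = 4 ^ 2 * (f * c + b ^ 2) ^ 3 := by
  have h2f : (2 * f) ^ 2 ≠ 0 := pow_ne_zero _ (mul_ne_zero h2 hf)
  rw [← sub_eq_zero, ← mul_eq_zero_iff_left h2f, discrim]
  constructor <;> intro h <;> linear_combination h

variable [Fintype F] [DecidableEq F]

lemma card_discrim_eq_zero (hF : ringChar F ≠ 2) {f : F} (hf : f ≠ 0) (b c : F) :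
    (#{d | discrim (b ^ 2 + c * f) (b * c + d * f) (c ^ 2 - b * d) = 0} : ℤ) =
      quadraticChar F (f * c + b ^ 2) + 1 := by
  have h2 := Ring.two_ne_zero hF
  simp_rw [discrim_eq_zero_iff_sq_eq h2 hf]
  exact card_filter_affine_sq_eq_sq_mul_pow_three hF (mul_ne_zero h2 (pow_ne_zero 2 hf)) _
    (by rw [show (4 : F) = 2 * 2 by norm_num]; exact mul_ne_zero h2 h2) _

lemma sum_card_discrim_eq_zero (hF : ringChar F ≠ 2) {f : F} (hf : f ≠ 0) (b : F) :
    ∑ c, #{d | discrim (b ^ 2 + c * f) (b * c + d * f) (c ^ 2 - b * d) = 0} =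
      Fintype.card F := by
  zify
  simp_rw [card_discrim_eq_zero hF hf, sum_add_distrib, sum_quadraticChar_affine hF hf]
  simp

end Discriminant

/-- The number of tuples `(b,c,d,e,f) ∈ F^5` with `f ≠ 0` satisfying
`(bc+df)² − 4(b²+cf)(c²−bd) = 0` equals `q³·(q−1)`. -/
theorem count_discriminant_f_ne_zero (F : Type*) [Field F] [Fintype F]
    (q : ℕ) (hq : Fintype.card F = q) (hchar : 3 < ringChar F) :
    {v : F × F × F × F × F | v.2.2.2.2 ≠ 0 ∧
        (v.1 * v.2.1 + v.2.2.1 * v.2.2.2.2) ^ 2 -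
          4 * (v.1 ^ 2 + v.2.1 * v.2.2.2.2) * (v.2.1 ^ 2 - v.1 * v.2.2.1) = 0}.ncard =
      q ^ 3 * (q - 1) := by
  classical
  have hF : ringChar F ≠ 2 := by omega
  have hfiber (b f : F) : ∑ c, ∑ d,
      (if f ≠ 0 ∧ discrim (b ^ 2 + c * f) (b * c + d * f) (c ^ 2 - b * d) = 0 then 1 else 0) =
        if f = 0 then 0 else q := by
    split_ifs with hf
    · simp [hf]
    · simp only [hf, ne_eq, not_false_eq_true, true_and, sum_boole, Nat.cast_id]
      rw [sum_card_discrim_eq_zero hF hf, hq]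
  let σ : F × F × F × F × F ≃ F × F × F × F × F :=
    { toFun := fun (b, f, e, c, d) => (b, c, d, e, f)
      invFun := fun (b, c, d, e, f) => (b, f, e, c, d) }
  rw [Set.ncard_eq_toFinset_card', Set.toFinset_ofPred, card_filter, ← σ.sum_comp]
  simp only [Fintype.sum_prod_type]
  change ∑ b, ∑ f, ∑ e, ∑ c, ∑ d,
    (if f ≠ 0 ∧ discrim (b ^ 2 + c * f) (b * c + d * f) (c ^ 2 - b * d) = 0 then 1 else 0) = _
  simp only [hfiber, sum_const, card_univ, hq, smul_eq_mul]
  rw [← mul_sum, sum_ite, sum_const_zero, zero_add, sum_const, filter_ne',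
    card_erase_of_mem (mem_univ _), card_univ, hq, smul_eq_mul]
  ring
end

section
/- Suppose a ≠ 0 and f = 0, and let X = X(a,b,c,d,e,0). Then rank X = 4, X³ = 0, and rank X² = 1 if 4ae − 4bd + 3c² = 0 while rank X² = 2 otherwise. -/
open Matrix

namespace Matrix

variable {m n R : Type*} [Fintype n] [CommRing R] [StrongRankCondition R]

theorem rank_eq_of_mul_submatrix_eq_of_isUnit_det {k : ℕ} {A : Matrix m n R}
    {r : Fin k → m} (c : Fin k → n) (B : Matrix m (Fin k) R) (hB : B * A.submatrix r id = A)
    (hdet : IsUnit (A.submatrix r c).det) : A.rank = k := by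
  refine le_antisymm ?_ ?_
  · rw [← hB]
    exact (rank_mul_le_left _ _).trans ((rank_le_card_width _).trans_eq (Fintype.card_fin k))
  · calc k = (A.submatrix r c).rank := by
          rw [rank_of_isUnit _ ((isUnit_iff_isUnit_det _).2 hdet), Fintype.card_fin]
      _ ≤ A.rank := rank_submatrix_le _ _ _

end Matrix

section G2

variable {F : Type*} [Field F] (a b c d e : F)

theorem g2X_sq : g2X a b c d e 0 ^ 2 =
    !![0, 0, 0, 0, a*c, b*c, 2*c^2 - 2*b*d + 2*a*e;
       0, 0, 0, 0, -2*a*b, -2*b^2, -b*c;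
       0, 0, 0, 0, 2*a^2, 2*a*b, a*c;
       0, 0, 0, 0, 0, 0, 0;
       0, 0, 0, 0, 0, 0, 0;
       0, 0, 0, 0, 0, 0, 0;
       0, 0, 0, 0, 0, 0, 0] := by
  rw [pow_two, g2X]
  ext i j
  fin_cases i <;> fin_cases j <;> simp [mul_apply, Fin.sum_univ_succ] <;> ring

theorem g2X_pow_three : g2X a b c d e 0 ^ 3 = 0 := by
  rw [pow_succ', g2X_sq, g2X]
  ext i j
  fin_cases i <;> fin_cases j <;> simp [mul_apply, Fin.sum_univ_succ] <;> ring

theorem g2X_eq_mul_submatrix (ha : a ≠ 0) :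
    !![1, 0, 0, 0;
       0, -(b/a), -(c/a), (a*e - b*d + c^2)/a^2;
       0, 1, 0, 0;
       0, 0, 1, 0;
       0, 0, 0, -(b/a);
       0, 0, 0, 1;
       0, 0, 0, 0] * (g2X a b c d e 0).submatrix ![0, 2, 3, 5] id = g2X a b c d e 0 := by
  ext i j
  rw [mul_apply, g2X]
  fin_cases i <;> fin_cases j <;> simp [Fin.sum_univ_succ] <;> field_simp <;> ring

theorem det_g2X_submatrix :
    ((g2X a b c d e 0).submatrix ![0, 2, 3, 5] ![1, 3, 4, 6]).det = 2 * a ^ 4 := by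
  simp [g2X, det_succ_row_zero, Fin.sum_univ_succ, submatrix]
  ring

theorem g2X_sq_eq_mul_submatrix (ha : a ≠ 0) :
    !![1, 0; 0, -(b/a); 0, 1; 0, 0; 0, 0; 0, 0; 0, 0] *
      (g2X a b c d e 0 ^ 2).submatrix ![0, 2] id = g2X a b c d e 0 ^ 2 := by
  ext i j
  rw [mul_apply, g2X_sq]
  fin_cases i <;> fin_cases j <;> simp [Fin.sum_univ_succ] <;> field_simp

theorem det_g2X_sq_submatrix :
    ((g2X a b c d e 0 ^ 2).submatrix ![0, 2] ![6, 4]).det =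
      a ^ 2 * (4 * a * e - 4 * b * d + 3 * c ^ 2) := by
  rw [g2X_sq, det_fin_two]
  simp
  ring

theorem g2X_sq_eq_mul_submatrix_of_eq_zero (ha : a ≠ 0) (h2 : (2 : F) ≠ 0)
    (hκ : 4 * a * e - 4 * b * d + 3 * c ^ 2 = 0) :
    !![c / (2 * a); -(b/a); 1; 0; 0; 0; 0] *
      (g2X a b c d e 0 ^ 2).submatrix ![2] id = g2X a b c d e 0 ^ 2 := by
  ext i j
  rw [mul_apply, g2X_sq]
  fin_cases i <;> fin_cases j <;> simp <;> field_simp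
  linear_combination -hκ

theorem det_g2X_sq_submatrix_single :
    ((g2X a b c d e 0 ^ 2).submatrix ![2] ![4]).det = 2 * a ^ 2 := by
  rw [det_fin_one]
  simp [g2X_sq]

end G2

theorem g2_case3_general (F : Type*) [Field F] (hchar : 3 < ringChar F)
    (a b c d e : F) (ha : a ≠ 0) :
    (g2X a b c d e 0).rank = 4 ∧ (g2X a b c d e 0) ^ 3 = 0 ∧
    (4 * a * e - 4 * b * d + 3 * c ^ 2 = 0 → ((g2X a b c d e 0) ^ 2).rank = 1) ∧
    (4 * a * e - 4 * b * d + 3 * c ^ 2 ≠ 0 → ((g2X a b c d e 0) ^ 2).rank = 2) := by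
  have h2 : (2 : F) ≠ 0 := Ring.two_ne_zero (by omega)
  refine ⟨?_, g2X_pow_three a b c d e, fun hκ => ?_, fun hκ => ?_⟩
  · refine rank_eq_of_mul_submatrix_eq_of_isUnit_det ![1, 3, 4, 6] _
      (g2X_eq_mul_submatrix a b c d e ha) ?_
    rw [det_g2X_submatrix]
    exact (mul_ne_zero h2 (pow_ne_zero 4 ha)).isUnit
  · refine rank_eq_of_mul_submatrix_eq_of_isUnit_det ![4] _
      (g2X_sq_eq_mul_submatrix_of_eq_zero a b c d e ha h2 hκ) ?_
    rw [det_g2X_sq_submatrix_single]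
    exact (mul_ne_zero h2 (pow_ne_zero 2 ha)).isUnit
  · refine rank_eq_of_mul_submatrix_eq_of_isUnit_det ![6, 4] _
      (g2X_sq_eq_mul_submatrix a b c d e ha) ?_
    rw [det_g2X_sq_submatrix]
    exact (mul_ne_zero (pow_ne_zero 2 ha) hκ).isUnit

/-- Let `a ≠ 0` and `f = 0`, `X = X(a,b,c,d,e,0)`. Then `rank X = 4`, `X³ = 0`,
and `rank X² = 1` when `4ae − 4bd + 3c² = 0`, while `rank X² = 2` otherwise. -/
theorem g2_case3 (F : Type*) [Field F] [Fintype F] (hchar : 3 < ringChar F)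
    (a b c d e : F) (ha : a ≠ 0) :
    (g2X a b c d e 0).rank = 4 ∧ (g2X a b c d e 0) ^ 3 = 0 ∧
    (4 * a * e - 4 * b * d + 3 * c ^ 2 = 0 → ((g2X a b c d e 0) ^ 2).rank = 1) ∧
    (4 * a * e - 4 * b * d + 3 * c ^ 2 ≠ 0 → ((g2X a b c d e 0) ^ 2).rank = 2) :=
  g2_case3_general F hchar a b c d e ha
end

section
/- Suppose a = 0 and f = 0, and let X = X(0,b,c,d,e,0). Then rank X = 4 if (b,c) ≠ (0,0); rank X = 2 if b = c = 0 and (d,e) ≠ (0,0); and X = 0 if b = c = d = e = 0. -/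
private lemma fin7_2 : (2 : Fin 7) = Fin.succ 1 := rfl
private lemma fin7_3 : (3 : Fin 7) = Fin.succ 2 := rfl
private lemma fin7_4 : (4 : Fin 7) = Fin.succ 3 := rfl
private lemma fin7_5 : (5 : Fin 7) = Fin.succ 4 := rfl
private lemma fin7_6 : (6 : Fin 7) = Fin.succ 5 := rfl
private lemma fin6_2 : (2 : Fin 6) = Fin.succ 1 := rfl
private lemma fin6_3 : (3 : Fin 6) = Fin.succ 2 := rfl
private lemma fin6_4 : (4 : Fin 6) = Fin.succ 3 := rfl
private lemma fin6_5 : (5 : Fin 6) = Fin.succ 4 := rfl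
private lemma fin5_2 : (2 : Fin 5) = Fin.succ 1 := rfl
private lemma fin5_3 : (3 : Fin 5) = Fin.succ 2 := rfl
private lemma fin5_4 : (4 : Fin 5) = Fin.succ 3 := rfl
private lemma fin3_2 : (2 : Fin 3) = Fin.succ 1 := rfl
private lemma fin4_2 : (2 : Fin 4) = Fin.succ 1 := rfl
private lemma fin4_3 : (3 : Fin 4) = Fin.succ 2 := rfl

lemma g2_rank_le_aux {F : Type*} [Field F] {k n : ℕ} (A : Matrix (Fin n) (Fin n) F)
    (B : Matrix (Fin n) (Fin k) F) (C : Matrix (Fin k) (Fin n) F) (h : A = B * C) :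
    A.rank ≤ k := by
  calc A.rank = (B * C).rank := by rw [h]
    _ ≤ C.rank := Matrix.rank_mul_le_right B C
    _ ≤ Fintype.card (Fin k) := Matrix.rank_le_card_height C
    _ = k := Fintype.card_fin k

lemma g2_rank_ge_aux {F : Type*} [Field F] {k n : ℕ} (A : Matrix (Fin n) (Fin n) F)
    (r c : Fin k → Fin n) (h : IsUnit (A.submatrix r c).det) :
    k ≤ A.rank := by
  have hfac : A.submatrix r c =
      ((1 : Matrix (Fin n) (Fin n) F).submatrix r (Equiv.refl (Fin n))) *
        (A * (1 : Matrix (Fin n) (Fin n) F).submatrix (Equiv.refl (Fin n)) c) := by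
    rw [Matrix.mul_submatrix_one, Matrix.one_submatrix_mul]
    simp
  have h1 : (A.submatrix r c).rank ≤ A.rank := by
    calc (A.submatrix r c).rank
        ≤ (A * (1 : Matrix (Fin n) (Fin n) F).submatrix (Equiv.refl (Fin n)) c).rank := by
          rw [hfac]; exact Matrix.rank_mul_le_right _ _
      _ ≤ A.rank := Matrix.rank_mul_le_left _ _
  have h2 : (A.submatrix r c).rank = k := by
    rw [Matrix.rank_of_isUnit _ ((Matrix.isUnit_iff_isUnit_det _).mpr h), Fintype.card_fin]
  omega

set_option maxHeartbeats 1600000 in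
/-- Let `a = 0` and `f = 0`, `X = X(0,b,c,d,e,0)`. Then `rank X = 4` if
`(b,c) ≠ (0,0)`; `rank X = 2` if `b = c = 0` and `(d,e) ≠ (0,0)`;
and `X = 0` if `b = c = d = e = 0`. -/
theorem g2_case4_rank_X (F : Type*) [Field F] [Fintype F] (hchar : 3 < ringChar F)
    (b c d e : F) :
    (¬(b = 0 ∧ c = 0) → (g2X 0 b c d e 0).rank = 4) ∧
    (b = 0 → c = 0 → ¬(d = 0 ∧ e = 0) → (g2X 0 b c d e 0).rank = 2) ∧
    (b = 0 → c = 0 → d = 0 → e = 0 → g2X (0 : F) b c d e 0 = 0) := by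
  have h2 : (2 : F) ≠ 0 := by
    intro h
    have : ringChar F ∣ 2 := ringChar.dvd (by exact_mod_cast h)
    have := Nat.le_of_dvd (by norm_num) this
    omega
  refine ⟨?_, ?_, ?_⟩
  · -- rank 4 case
    intro hbc
    apply le_antisymm
    · apply g2_rank_le_aux (k := 4) _
        !![1,0,e,0; 0,1,0,e; 0,0,-c,-d; 0,0,b,c; 0,0,0,-b; 0,0,0,0; 0,0,0,0]
        !![0,0,b,2*c,d,0,0; 0,0,0,-2*b,-c,0,0; 0,0,0,0,0,1,0; 0,0,0,0,0,0,1]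
      ext i j
      fin_cases i <;> fin_cases j <;>
        simp [g2X, Matrix.mul_apply, Fin.sum_univ_succ,
          Matrix.vecHead, Matrix.vecTail, fin7_2, fin7_3, fin7_4, fin7_5, fin7_6, fin6_2, fin6_3, fin6_4, fin6_5, fin5_2, fin5_3, fin5_4, fin4_2, fin4_3, fin3_2]
    · by_cases hb : b = 0
      · have hc : c ≠ 0 := by tauto
        apply g2_rank_ge_aux _ ![0,1,2,3] ![3,4,5,6]
        have hsub : (g2X 0 b c d e 0).submatrix ![0,1,2,3] ![3,4,5,6] =
            !![2*c, d, e, 0; 0, -c, 0, e; 0, 0, -c, -d; 0, 0, 0, c] := by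
          subst hb
          ext i j
          fin_cases i <;> fin_cases j <;>
            simp [g2X, Matrix.vecHead, Matrix.vecTail, fin7_2, fin7_3, fin7_4, fin7_5, fin7_6, fin6_2, fin6_3, fin6_4, fin6_5, fin5_2, fin5_3, fin5_4, fin4_2, fin4_3, fin3_2]
        rw [hsub]
        have hdet : (!![2*c, d, e, 0; 0, -c, 0, e; 0, 0, -c, -d; 0, 0, 0, c] :
            Matrix (Fin 4) (Fin 4) F).det = 2 * c^4 := by
          simp [Matrix.det_succ_row_zero, Fin.sum_univ_succ]
          ring
        rw [hdet]
        exact isUnit_iff_ne_zero.mpr (mul_ne_zero h2 (pow_ne_zero _ hc))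
      · apply g2_rank_ge_aux _ ![0,1,3,4] ![2,3,5,6]
        have hsub : (g2X 0 b c d e 0).submatrix ![0,1,3,4] ![2,3,5,6] =
            !![b, 2*c, e, 0; 0, -2*b, 0, e; 0, 0, b, c; 0, 0, 0, -b] := by
          ext i j
          fin_cases i <;> fin_cases j <;>
            simp [g2X, Matrix.vecHead, Matrix.vecTail, fin7_2, fin7_3, fin7_4, fin7_5, fin7_6, fin6_2, fin6_3, fin6_4, fin6_5, fin5_2, fin5_3, fin5_4, fin4_2, fin4_3, fin3_2]
        rw [hsub]
        have hdet : (!![b, 2*c, e, 0; 0, -2*b, 0, e; 0, 0, b, c; 0, 0, 0, -b] :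
            Matrix (Fin 4) (Fin 4) F).det = 2 * b^4 := by
          simp [Matrix.det_succ_row_zero, Fin.sum_univ_succ]
          ring
        rw [hdet]
        exact isUnit_iff_ne_zero.mpr (mul_ne_zero h2 (pow_ne_zero _ hb))
  · -- rank 2 case
    intro hb hc hde
    subst hb; subst hc
    apply le_antisymm
    · apply g2_rank_le_aux (k := 2) _
        !![1,0; 0,e; 0,-d; 0,0; 0,0; 0,0; 0,0]
        !![0,0,0,0,d,e,0; 0,0,0,0,0,0,1]
      ext i j
      fin_cases i <;> fin_cases j <;>
        simp [g2X, Matrix.mul_apply, Fin.sum_univ_succ,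
          Matrix.vecHead, Matrix.vecTail, fin7_2, fin7_3, fin7_4, fin7_5, fin7_6, fin6_2, fin6_3, fin6_4, fin6_5, fin5_2, fin5_3, fin5_4, fin4_2, fin4_3, fin3_2]
    · by_cases he : e = 0
      · have hd : d ≠ 0 := by tauto
        apply g2_rank_ge_aux _ ![0,2] ![4,6]
        have hsub : (g2X 0 (0:F) 0 d e 0).submatrix ![0,2] ![4,6] =
            !![d, 0; 0, -d] := by
          subst he
          ext i j
          fin_cases i <;> fin_cases j <;>
            simp [g2X, Matrix.vecHead, Matrix.vecTail, fin7_2, fin7_3, fin7_4, fin7_5, fin7_6, fin6_2, fin6_3, fin6_4, fin6_5, fin5_2, fin5_3, fin5_4, fin4_2, fin4_3, fin3_2]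
        rw [hsub, Matrix.det_fin_two_of]
        refine isUnit_iff_ne_zero.mpr fun h => hd ?_
        have : -(d*d) = 0 := by rw [← h]; ring
        exact mul_self_eq_zero.mp (neg_eq_zero.mp this)
      · apply g2_rank_ge_aux _ ![0,1] ![5,6]
        have hsub : (g2X 0 (0:F) 0 d e 0).submatrix ![0,1] ![5,6] =
            !![e, 0; 0, e] := by
          ext i j
          fin_cases i <;> fin_cases j <;>
            simp [g2X, Matrix.vecHead, Matrix.vecTail, fin7_2, fin7_3, fin7_4, fin7_5, fin7_6, fin6_2, fin6_3, fin6_4, fin6_5, fin5_2, fin5_3, fin5_4, fin4_2, fin4_3, fin3_2]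
        rw [hsub, Matrix.det_fin_two_of]
        simpa using isUnit_iff_ne_zero.mpr (mul_ne_zero he he)
  · intro hb hc hd he
    subst hb; subst hc; subst hd; subst he
    ext i j
    fin_cases i <;> fin_cases j <;>
      simp [g2X, Matrix.vecHead, Matrix.vecTail, fin7_2, fin7_3, fin7_4, fin7_5, fin7_6, fin6_2, fin6_3, fin6_4, fin6_5, fin5_2, fin5_3, fin5_4, fin4_2, fin4_3, fin3_2]
end
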